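/- arXiv:1910.10248 — 2 statements merged into one kernel-verified Lean document; each statement's English description precedes it below -/
import Mathlib

section
/- Let K be a C¹-smooth convex body in the hyperbolic plane ℍ. Then the supremum over all frontier points x of K and all geodesic lines Γ normal to K at x of the projection length Metric.diam (P_Γ(K)) equals the diameter Metric.diam K, and this supremum is attained. -/
open scoped UpperHalfPlane
open Set Metric

/-- A unit-speed parametrization of a geodesic line in `ℍ`. -/
def IsGeodesicParam (γ : ℝ → ℍ) : Prop := ∀ s t : ℝ, dist (γ s) (γ t) = |s - t|

/-- A geodesic line in `ℍ`. -/
def IsGeodesicLine (Γ : Set ℍ) : Prop := ∃ γ : ℝ → ℍ, IsGeodesicParam γ ∧ Γ = Set.range γ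

/-- The geodesic segment `[x,y]` in `ℍ`. -/
def Seg (x y : ℍ) : Set ℍ := {z : ℍ | dist x z + dist z y = dist x y}

/-- Hyperbolic convexity: with any two points, `K` contains the geodesic segment joining them. -/
def HypConvex (K : Set ℍ) : Prop := ∀ ⦃x⦄, x ∈ K → ∀ ⦃y⦄, y ∈ K → Seg x y ⊆ K

/-- A convex body: compact, convex, with nonempty interior. -/
def IsConvexBody (K : Set ℍ) : Prop := IsCompact K ∧ HypConvex K ∧ (interior K).Nonempty

/-- The orthogonal projection of `K` onto a geodesic line `Γ`. -/
def Proj (Γ K : Set ℍ) : Set ℍ :=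
  {p : ℍ | p ∈ Γ ∧ ∃ k ∈ K, dist k p = Metric.infDist k Γ}

/-- `Γ` is normal to `K` at the frontier point `x`: `x` is an endpoint of the projection. -/
def IsNormalAt (K Γ : Set ℍ) (x : ℍ) : Prop :=
  x ∈ frontier K ∧ ∃ γ : ℝ → ℍ, IsGeodesicParam γ ∧ Γ = Set.range γ ∧
    ∃ s : ℝ, γ s = x ∧ (Proj Γ K ⊆ γ '' Set.Ici s ∨ Proj Γ K ⊆ γ '' Set.Iic s)

/-- `Γ` is a double normal of `K`. -/
def IsDoubleNormal (K Γ : Set ℍ) : Prop := (K ∩ Γ).Nonempty ∧ Proj Γ K = K ∩ Γ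

/-- `K` has constant width `w > 0`. -/
def HasConstantWidth (K : Set ℍ) (w : ℝ) : Prop :=
  0 < w ∧
  (∀ x ∈ frontier K, ∃ Γ : Set ℍ, IsGeodesicLine Γ ∧ IsNormalAt K Γ x) ∧
  ∀ Γ : Set ℍ, IsGeodesicLine Γ → (∃ x, IsNormalAt K Γ x) →
    IsDoubleNormal K Γ ∧ Metric.diam (K ∩ Γ) = w

/-- `K` is symmetric about `p`. -/
def SymmetricAbout (K : Set ℍ) (p : ℍ) : Prop :=
  ∀ x ∈ K, ∀ y : ℍ, dist x p = dist p y → dist x y = dist x p + dist p y → y ∈ K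

/-- `K` is `C¹`-smooth: its frontier, viewed in `ℂ`, is the image of a periodic `C¹`
map with nowhere-vanishing derivative, injective on a period. -/
def IsC1Smooth (K : Set ℍ) : Prop :=
  ∃ (r : ℝ → ℂ) (T : ℝ), 0 < T ∧ Function.Periodic r T ∧ ContDiff ℝ 1 r ∧
    (∀ t : ℝ, deriv r t ≠ 0) ∧ Set.InjOn r (Set.Ico 0 T) ∧
    (fun z : ℍ => (z : ℂ)) '' frontier K = Set.range r


/-!
Let `x, y ∈ K` realise the diameter `d` and let `γ` be the unit-speed geodesic with `γ 0 = x`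
and `γ d = y`. Nearest-point projection onto a geodesic line does not increase distances to
points of the line, so every projected point of `K` lies within `d` of both `x` and `y`, i.e. on
`γ '' [0, d]`. Hence the line is normal to `K` at `x` (a frontier point, since `γ` runs beyond
`x` away from `y`) with width `d`. Conversely, the projection onto a line normal at `x' ∈ K` lies
on one side of `x'` within distance `d` of it, so every width is at most `d`.

The projection estimate is checked on the imaginary axis, where hyperbolic Pythagoras reads
`cosh (dist z (imAxis t)) = ‖z‖ / im z * cosh (t - log ‖z‖)`, and transported by `SL(2, ℝ)`:
every geodesic line is an image of the axis, since `SL(2, ℝ)` moves any two points onto the axis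
and a point is determined by its distances to two points of the axis.
-/

namespace UpperHalfPlane

open Real

noncomputable def imAxis (t : ℝ) : ℍ := mk ⟨0, exp t⟩ (exp_pos t)

@[simp] lemma imAxis_re (t : ℝ) : (imAxis t).re = 0 := rfl

@[simp] lemma imAxis_im (t : ℝ) : (imAxis t).im = exp t := rfl

lemma coe_imAxis (t : ℝ) : (imAxis t : ℂ) = ((exp t : ℝ) : ℂ) * Complex.I := by
  apply Complex.ext <;> simp [imAxis, -Complex.ofReal_exp]

lemma dist_imAxis (s t : ℝ) : dist (imAxis s) (imAxis t) = |s - t| :=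
  ((isometry_vertical_line 0).dist_eq s t).trans (Real.dist_eq s t)

lemma sq_norm_coe (z : ℍ) : ‖(z : ℂ)‖ ^ 2 = z.re ^ 2 + z.im ^ 2 := by
  rw [Complex.sq_norm, Complex.normSq_apply, coe_re, coe_im, sq, sq]

lemma cosh_dist_imAxis (z : ℍ) (t : ℝ) :
    cosh (dist z (imAxis t)) = ‖(z : ℂ)‖ / z.im * cosh (t - log ‖(z : ℂ)‖) := by
  have hz : 0 < ‖(z : ℂ)‖ := norm_pos_iff.mpr z.ne_zero
  have him := z.im_pos
  rw [cosh_dist, Complex.dist_eq, Complex.sq_norm, Complex.normSq_apply, cosh_eq, exp_sub,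
    exp_neg, exp_sub, exp_log hz]
  simp only [Complex.sub_re, Complex.sub_im, coe_re, coe_im, imAxis_re, imAxis_im]
  field_simp
  linear_combination -sq_norm_coe z

lemma eq_imAxis_of_dist_eq {z : ℍ} {s h : ℝ} (hh : h ≠ 0)
    (h₀ : dist z (imAxis 0) = |s|) (h₁ : dist z (imAxis h) = |s - h|) : z = imAxis s := by
  have hz : 0 < ‖(z : ℂ)‖ := norm_pos_iff.mpr z.ne_zero
  set ρ := ‖(z : ℂ)‖ / z.im with hρ
  set σ := log ‖(z : ℂ)‖ with hσ
  have e₀ : cosh s = ρ * cosh σ := by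
    rw [← cosh_abs, ← h₀, cosh_dist_imAxis, zero_sub, cosh_neg]
  have e₁ : cosh (s - h) = ρ * cosh (h - σ) := by
    rw [← cosh_abs, ← h₁, cosh_dist_imAxis]
  have hsinh : ρ * sinh σ = sinh s := by
    rw [cosh_sub, cosh_sub] at e₁
    have : sinh h * (ρ * sinh σ - sinh s) = 0 := by linear_combination e₁ - cosh h * e₀
    linarith [(mul_eq_zero.mp this).resolve_left (sinh_ne_zero.mpr hh)]
  have hρ1 : ρ = 1 := by
    have hρ2 : ρ ^ 2 = 1 := by
      linear_combination -ρ ^ 2 * cosh_sq σ - (ρ * sinh σ + sinh s) * hsinh -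
        (cosh s + ρ * cosh σ) * e₀ + cosh_sq s
    have : 0 < ρ := div_pos hz z.im_pos
    nlinarith
  have hσs : σ = s := sinh_injective (by simpa [hρ1] using hsinh)
  have him : z.im = ‖(z : ℂ)‖ := by
    rw [hρ, div_eq_one_iff_eq z.im_pos.ne'] at hρ1
    exact hρ1.symm
  have hre : z.re = 0 := by
    have := sq_norm_coe z
    rw [← him] at this
    exact pow_eq_zero_iff two_ne_zero |>.mp (by linarith)
  exact ext_re_im hre (by rw [imAxis_im, him, ← hσs, hσ, exp_log hz])

lemma dist_imAxis_le_of_forall_dist_le {z : ℍ} {t₀ : ℝ}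
    (hmin : ∀ t, dist z (imAxis t₀) ≤ dist z (imAxis t)) (t : ℝ) :
    dist (imAxis t₀) (imAxis t) ≤ dist z (imAxis t) := by
  have hz : 0 < ‖(z : ℂ)‖ := norm_pos_iff.mpr z.ne_zero
  set ρ := ‖(z : ℂ)‖ / z.im with hρ
  set σ := log ‖(z : ℂ)‖ with hσ
  have hρ1 : 1 ≤ ρ := (one_le_div z.im_pos).mpr (Complex.im_le_norm _)
  have cosh_le_iff {a b : ℝ} (ha : 0 ≤ a) (hb : 0 ≤ b) : cosh a ≤ cosh b ↔ a ≤ b := by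
    rw [cosh_le_cosh, abs_of_nonneg ha, abs_of_nonneg hb]
  have ht₀ : t₀ = σ := by
    have h := (cosh_le_iff dist_nonneg dist_nonneg).mpr (hmin σ)
    rw [cosh_dist_imAxis, cosh_dist_imAxis, ← hρ, ← hσ, sub_self, cosh_zero, mul_one] at h
    have : cosh (t₀ - σ) ≤ 1 := le_of_mul_le_mul_left (by rwa [mul_one]) (by linarith)
    rwa [← cosh_zero, cosh_le_cosh, abs_zero, abs_nonpos_iff, sub_eq_zero] at this
  rw [← cosh_le_iff dist_nonneg dist_nonneg, dist_imAxis, cosh_abs, cosh_dist_imAxis, ← hρ, ← hσ,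
    ht₀, ← cosh_neg, neg_sub]
  exact le_mul_of_one_le_left (cosh_pos _).le hρ1

open scoped MatrixGroups

def mkSL2 (a b c d : ℝ) (h : a * d - b * c = 1) : SL(2, ℝ) :=
  ⟨!![a, b; c, d], by simp [Matrix.det_fin_two_of, h]⟩

lemma coe_mkSL2_smul {a b c d : ℝ} (h : a * d - b * c = 1) (z : ℍ) :
    ((mkSL2 a b c d h • z : ℍ) : ℂ) = (a * z + b) / (c * z + d) := by
  rw [coe_specialLinearGroup_apply]
  simp [mkSL2]

lemma exists_smul_coe_eq_affine {a : ℝ} (ha : 0 < a) (b : ℝ) :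
    ∃ g : SL(2, ℝ), ∀ z : ℍ, ((g • z : ℍ) : ℂ) = a * z + b := by
  have hsa : √a ≠ 0 := (sqrt_pos.mpr ha).ne'
  refine ⟨mkSL2 (√a) (b / √a) 0 (√a)⁻¹ (by field_simp; ring), fun z => ?_⟩
  rw [coe_mkSL2_smul]
  have : ((√a : ℝ) : ℂ) ≠ 0 := by exact_mod_cast hsa
  have hsq : ((√a : ℝ) : ℂ) * (√a : ℝ) = a := by exact_mod_cast Real.mul_self_sqrt ha.le
  push_cast
  field_simp
  rw [← hsq]
  ring

def sl2Flip : SL(2, ℝ) := mkSL2 0 (-1) 1 0 (by norm_num)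

lemma sl2Flip_smul_imAxis (t : ℝ) : sl2Flip • imAxis t = imAxis (-t) := by
  apply UpperHalfPlane.ext
  rw [sl2Flip, coe_mkSL2_smul, coe_imAxis, coe_imAxis, exp_neg, Complex.ofReal_inv]
  have : ((exp t : ℝ) : ℂ) ≠ 0 := by exact_mod_cast (exp_pos t).ne'
  simp only [Complex.ofReal_zero, Complex.ofReal_one, Complex.ofReal_neg]
  field_simp
  linear_combination -((exp t : ℝ) : ℂ) * Complex.I_sq

-- `z ↦ -1 / (z - (c + r))` sends the endpoint `c + r` of the geodesic semicircle of centre `c`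
-- and radius `r` to `∞`, hence the semicircle onto a vertical line.
lemma re_mkSL2_smul_of_sq_eq {c r : ℝ} (hr : 0 < r) {z : ℍ}
    (hz : (z.re - c) ^ 2 + z.im ^ 2 = r ^ 2) :
    (mkSL2 0 (-1) 1 (-(c + r)) (by ring) • z).re = 1 / (2 * r) := by
  have hw : ((mkSL2 0 (-1) 1 (-(c + r)) (by ring) • z : ℍ) : ℂ) = -((z : ℂ) - (c + r : ℝ))⁻¹ := by
    rw [coe_mkSL2_smul]; push_cast; ring
  rw [← coe_re, hw, Complex.neg_re, Complex.inv_re, Complex.normSq_apply]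
  simp only [Complex.sub_re, Complex.sub_im, coe_re, coe_im, Complex.ofReal_re, Complex.ofReal_im,
    sub_zero]
  field_simp
  linear_combination -hz

lemma exists_smul_re_eq (x y : ℍ) : ∃ g : SL(2, ℝ), (g • x).re = (g • y).re := by
  by_cases hre : x.re = y.re
  · exact ⟨1, by simpa using hre⟩
  have hne : x.re - y.re ≠ 0 := sub_ne_zero.mpr hre
  obtain ⟨c, hc⟩ : ∃ c : ℝ, (x.re - c) ^ 2 + x.im ^ 2 = (y.re - c) ^ 2 + y.im ^ 2 :=
    ⟨(x.re ^ 2 + x.im ^ 2 - y.re ^ 2 - y.im ^ 2) / (2 * (x.re - y.re)), by field_simp; ring⟩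
  set r := √((x.re - c) ^ 2 + x.im ^ 2)
  have hr : 0 < r := sqrt_pos.mpr (by positivity)
  have hx : (x.re - c) ^ 2 + x.im ^ 2 = r ^ 2 := (sq_sqrt (by positivity)).symm
  exact ⟨_, (re_mkSL2_smul_of_sq_eq hr hx).trans (re_mkSL2_smul_of_sq_eq hr (hc ▸ hx)).symm⟩

lemma exists_smul_eq_imAxis_of_re_eq {x y : ℍ} (hre : x.re = y.re) :
    ∃ (g : SL(2, ℝ)) (t : ℝ), g • x = imAxis 0 ∧ g • y = imAxis t := by
  have hx := x.im_pos
  obtain ⟨g, hg⟩ := exists_smul_coe_eq_affine (inv_pos.mpr hx) (-x.re / x.im)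
  have hg_re (z : ℍ) : (g • z).re = (z.re - x.re) / x.im := by
    rw [← coe_re, hg, Complex.add_re, Complex.re_ofReal_mul, Complex.ofReal_re, coe_re]
    ring
  have hg_im (z : ℍ) : (g • z).im = z.im / x.im := by
    rw [← coe_im, hg, Complex.add_im, Complex.im_ofReal_mul, Complex.ofReal_im, coe_im]
    ring
  refine ⟨g, log (y.im / x.im), ext_re_im ?_ ?_, ext_re_im ?_ ?_⟩
  · simp [hg_re]
  · simp [hg_im, hx.ne']
  · simp [hg_re, hre]
  · simp [hg_im, exp_log (div_pos y.im_pos hx)]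

lemma exists_smul_eq_imAxis (x y : ℍ) :
    ∃ g : SL(2, ℝ), g • x = imAxis 0 ∧ g • y = imAxis (dist x y) := by
  obtain ⟨g₁, hg₁⟩ := exists_smul_re_eq x y
  obtain ⟨g₂, t, hx, hy⟩ := exists_smul_eq_imAxis_of_re_eq hg₁
  rw [← mul_smul] at hx hy
  have hdist : dist x y = |t| := by
    rw [← dist_smul (g₂ * g₁), hx, hy, dist_imAxis, zero_sub, abs_neg]
  rcases le_or_gt 0 t with ht | ht
  · exact ⟨g₂ * g₁, hx, by rw [hy, hdist, abs_of_nonneg ht]⟩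
  · refine ⟨sl2Flip * (g₂ * g₁), ?_, ?_⟩ <;> rw [mul_smul]
    · rw [hx, sl2Flip_smul_imAxis, neg_zero]
    · rw [hy, sl2Flip_smul_imAxis, hdist, abs_of_neg ht]

end UpperHalfPlane

open UpperHalfPlane Bornology
open scoped MatrixGroups

lemma isGeodesicParam_smul_imAxis (g : SL(2, ℝ)) : IsGeodesicParam (g • imAxis ·) := fun s t => by
  rw [dist_smul, dist_imAxis]

lemma exists_isGeodesicParam_joining (x y : ℍ) :
    ∃ γ : ℝ → ℍ, IsGeodesicParam γ ∧ γ 0 = x ∧ γ (dist x y) = y := by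
  obtain ⟨g, hx, hy⟩ := exists_smul_eq_imAxis x y
  exact ⟨(g⁻¹ • imAxis ·), isGeodesicParam_smul_imAxis _, inv_smul_eq_iff.mpr hx.symm,
    inv_smul_eq_iff.mpr hy.symm⟩

namespace IsGeodesicParam

variable {γ : ℝ → ℍ}

lemma isometry (hγ : IsGeodesicParam γ) : Isometry γ :=
  Isometry.of_dist_eq fun s t => (hγ s t).trans (Real.dist_eq s t).symm

lemma isBounded_image_Icc (hγ : IsGeodesicParam γ) (a b : ℝ) : IsBounded (γ '' Icc a b) :=
  (isCompact_Icc.image hγ.isometry.continuous).isBounded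

lemma diam_le_of_subset_image_Icc (hγ : IsGeodesicParam γ) {S : Set ℍ} {a b : ℝ} (hab : a ≤ b)
    (hS : S ⊆ γ '' Icc a b) : diam S ≤ b - a := by
  refine (diam_mono hS (hγ.isBounded_image_Icc a b)).trans ?_
  rw [hγ.isometry.diam_image, Real.diam_Icc hab]

lemma exists_eq_smul_imAxis (hγ : IsGeodesicParam γ) :
    ∃ g : SL(2, ℝ), ∀ s, γ s = g • imAxis s := by
  obtain ⟨g, h₀, h₁⟩ := exists_smul_eq_imAxis (γ 0) (γ 1)
  refine ⟨g⁻¹, fun s => eq_inv_smul_iff.mpr (eq_imAxis_of_dist_eq one_ne_zero ?_ ?_)⟩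
  · rw [← h₀, dist_smul, hγ, sub_zero]
  · rw [hγ, zero_sub, abs_neg, abs_one] at h₁
    rw [← h₁, dist_smul, hγ]

lemma dist_le_of_forall_dist_le (hγ : IsGeodesicParam γ) {k : ℍ} {t₀ : ℝ}
    (hmin : ∀ t, dist k (γ t₀) ≤ dist k (γ t)) (t : ℝ) :
    dist (γ t₀) (γ t) ≤ dist k (γ t) := by
  obtain ⟨g, hg⟩ := hγ.exists_eq_smul_imAxis
  have hdist (t : ℝ) : dist k (γ t) = dist (g⁻¹ • k) (imAxis t) := by
    rw [hg, ← dist_smul g⁻¹, inv_smul_smul]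
  rw [hdist, hg, hg, dist_smul]
  exact dist_imAxis_le_of_forall_dist_le (fun t => by simpa only [hdist] using hmin t) t

end IsGeodesicParam

lemma IsCompact.exists_dist_eq_diam {X : Type*} [PseudoMetricSpace X] {K : Set X}
    (hK : IsCompact K) (hne : K.Nonempty) : ∃ x ∈ K, ∃ y ∈ K, dist x y = diam K := by
  obtain ⟨⟨x, y⟩, ⟨hx, hy⟩, hmax⟩ :=
    (hK.prod hK).exists_isMaxOn (hne.prod hne) continuous_dist.continuousOn
  refine ⟨x, hx, y, hy, le_antisymm (dist_le_diam_of_mem hK.isBounded hx hy) ?_⟩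
  exact diam_le_of_forall_dist_le dist_nonneg fun a ha b hb => hmax (mk_mem_prod ha hb)

lemma inter_subset_proj (Γ K : Set ℍ) : K ∩ Γ ⊆ Proj Γ K := fun p ⟨hK, hΓ⟩ =>
  ⟨hΓ, p, hK, by rw [dist_self, infDist_zero_of_mem hΓ]⟩

section

variable {K : Set ℍ} {γ : ℝ → ℍ}

lemma IsGeodesicParam.dist_le_diam_of_mem_proj (hγ : IsGeodesicParam γ) (hK : IsBounded K)
    {p : ℍ} (hp : p ∈ Proj (range γ) K) {s : ℝ} (hs : γ s ∈ K) : dist p (γ s) ≤ diam K := by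
  obtain ⟨⟨t₀, rfl⟩, k, hk, hkp⟩ := hp
  calc dist (γ t₀) (γ s) ≤ dist k (γ s) :=
        hγ.dist_le_of_forall_dist_le (fun t => hkp ▸ infDist_le_dist_of_mem (mem_range_self t)) s
    _ ≤ diam K := dist_le_diam_of_mem hK hk hs

lemma IsNormalAt.diam_proj_le {Γ : Set ℍ} {x : ℍ} (h : IsNormalAt K Γ x) (hKc : IsClosed K)
    (hKb : IsBounded K) : diam (Proj Γ K) ≤ diam K := by
  obtain ⟨hx, γ, hγ, rfl, s, rfl, hside⟩ := h
  have hdist {p : ℍ} (hp : p ∈ Proj (range γ) K) {t : ℝ} (hpt : γ t = p) : |t - s| ≤ diam K := by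
    rw [← hγ t s, hpt]
    exact hγ.dist_le_diam_of_mem_proj hKb hp (hKc.frontier_subset hx)
  have hd : 0 ≤ diam K := diam_nonneg
  rcases hside with hside | hside
  · have hsub : Proj (range γ) K ⊆ γ '' Icc s (s + diam K) := fun p hp => by
      obtain ⟨t, ht, rfl⟩ := hside hp
      exact ⟨t, ⟨ht, by linarith [(abs_le.mp (hdist hp rfl)).2]⟩, rfl⟩
    simpa using hγ.diam_le_of_subset_image_Icc (by linarith) hsub
  · have hsub : Proj (range γ) K ⊆ γ '' Icc (s - diam K) s := fun p hp => by
      obtain ⟨t, ht, rfl⟩ := hside hp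
      exact ⟨t, ⟨by linarith [(abs_le.mp (hdist hp rfl)).1], ht⟩, rfl⟩
    simpa using hγ.diam_le_of_subset_image_Icc (by linarith) hsub

lemma IsGeodesicParam.proj_subset_image_Icc (hγ : IsGeodesicParam γ) (hK : IsBounded K)
    (h₀ : γ 0 ∈ K) (hd : γ (diam K) ∈ K) : Proj (range γ) K ⊆ γ '' Icc 0 (diam K) := by
  intro p hp
  obtain ⟨⟨t, rfl⟩, -⟩ := id hp
  have h₁ := hγ.dist_le_diam_of_mem_proj hK hp h₀
  have h₂ := hγ.dist_le_diam_of_mem_proj hK hp hd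
  rw [hγ, sub_zero, abs_le] at h₁
  rw [hγ, abs_le] at h₂
  exact ⟨t, ⟨by linarith, by linarith⟩, rfl⟩

lemma IsGeodesicParam.apply_zero_mem_frontier (hγ : IsGeodesicParam γ) (hKc : IsClosed K)
    (hKb : IsBounded K) (h₀ : γ 0 ∈ K) (hd : γ (diam K) ∈ K) : γ 0 ∈ frontier K := by
  refine hKc.frontier_eq ▸ ⟨h₀, fun hint => ?_⟩
  obtain ⟨ε, hε, hball⟩ := Metric.isOpen_iff.mp isOpen_interior _ hint
  have hmem : γ (-(ε / 2)) ∈ K := interior_subset <| hball <| by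
    rw [mem_ball, hγ, sub_zero, abs_neg, abs_of_pos (half_pos hε)]
    exact half_lt_self hε
  have := dist_le_diam_of_mem hKb hmem hd
  rw [hγ, abs_of_neg (by linarith [diam_nonneg (s := K)])] at this
  linarith

end

theorem max_width_eq_diam_general (K : Set ℍ) (hK : IsConvexBody K) :
    IsGreatest {d : ℝ | ∃ (x : ℍ) (Γ : Set ℍ), IsGeodesicLine Γ ∧ IsNormalAt K Γ x ∧
      d = Metric.diam (Proj Γ K)} (Metric.diam K) := by
  obtain ⟨hKc, -, hKint⟩ := hK
  obtain ⟨x, hx, y, hy, hxy⟩ := hKc.exists_dist_eq_diam (hKint.mono interior_subset)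
  obtain ⟨γ, hγ, rfl, hγy⟩ := exists_isGeodesicParam_joining x y
  rw [hxy] at hγy
  subst hγy
  have hproj := hγ.proj_subset_image_Icc hKc.isBounded hx hy
  have hnormal : IsNormalAt K (range γ) (γ 0) :=
    ⟨hγ.apply_zero_mem_frontier hKc.isClosed hKc.isBounded hx hy, γ, hγ, rfl, 0, rfl,
      Or.inl (hproj.trans (image_mono Icc_subset_Ici_self))⟩
  refine ⟨⟨γ 0, range γ, ⟨γ, hγ, rfl⟩, hnormal, le_antisymm ?_ ?_⟩, ?_⟩
  · exact hxy ▸ dist_le_diam_of_mem ((hγ.isBounded_image_Icc _ _).subset hproj)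
      (inter_subset_proj _ _ ⟨hx, mem_range_self _⟩) (inter_subset_proj _ _ ⟨hy, mem_range_self _⟩)
  · exact hnormal.diam_proj_le hKc.isClosed hKc.isBounded
  · rintro _ ⟨x, Γ, -, hn, rfl⟩
    exact hn.diam_proj_le hKc.isClosed hKc.isBounded

/-- **Lemma.** For a `C¹`-smooth convex body `K`, the maximum of the projection lengths over
all geodesic lines normal to `K` at frontier points equals the diameter of `K`, and it is
attained. -/
theorem max_width_eq_diam (K : Set ℍ) (hK : IsConvexBody K) (hsm : IsC1Smooth K) :
    IsGreatest {d : ℝ | ∃ (x : ℍ) (Γ : Set ℍ), IsGeodesicLine Γ ∧ IsNormalAt K Γ x ∧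
      d = Metric.diam (Proj Γ K)} (Metric.diam K) :=
  max_width_eq_diam_general K hK
end

section
/- Let K be a C¹-smooth convex body in the hyperbolic plane ℍ. Then the normal field of K covers the interior of K: for every point p in the interior of K there exist a frontier point x of K and a geodesic line Γ with p ∈ Γ such that Γ is normal to K at x. -/
open scoped UpperHalfPlane
open Set Metric

/-!
Let `x` be a point of `K` farthest from `p`, and `γ` the unit-speed geodesic with `γ 0 = p` and
`γ R = x`, `R = d(p, x)`. Points of `γ` just beyond `x` are farther from `p`, hence outside `K`,
so `x` lies on the frontier. By the hyperbolic Pythagorean theorem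
`cosh d(k, γ u) = cosh d(k, γ t₀) * cosh (u - t₀)`, the foot `γ t₀` of any `k ∈ K` satisfies
`|t₀| ≤ d(k, p) ≤ R`, so `x` is an endpoint of the projection of `K` onto `γ`.
-/

open Real Topology

theorem Isometry.mem_frontier_of_forall_dist_le {X : Type*} [PseudoMetricSpace X] {K : Set X}
    {γ : ℝ → X} (hγ : Isometry γ) {R : ℝ} (hx : γ R ∈ K) (hfar : ∀ k ∈ K, dist (γ 0) k ≤ R) :
    γ R ∈ frontier K := by
  refine ⟨subset_closure hx, fun hint => ?_⟩
  have hnear : ∀ᶠ t in 𝓝[>] R, γ t ∈ interior K := nhdsWithin_le_nhds <|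
    hγ.continuous.continuousAt.preimage_mem_nhds (isOpen_interior.mem_nhds hint)
  obtain ⟨t, ht, hRt⟩ := (hnear.and self_mem_nhdsWithin).exists
  have := hfar _ (interior_subset ht)
  rw [hγ.dist_eq, Real.dist_eq, zero_sub, abs_neg] at this
  linarith [le_abs_self t]

theorem exists_mul_cosh_sub_eq {A B : ℝ} (h : |B| < A) :
    ∃ C t₀ : ℝ, ∀ u, A * cosh u - B * sinh u = C * cosh (u - t₀) := by
  have hAB : 0 < A ^ 2 - B ^ 2 := by nlinarith [abs_nonneg B, sq_abs B]
  set C := √(A ^ 2 - B ^ 2)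
  have hC : 0 < C := sqrt_pos.mpr hAB
  have hC2 : C ^ 2 = A ^ 2 - B ^ 2 := sq_sqrt hAB.le
  have hA : 0 < A := (abs_nonneg B).trans_lt h
  have hcosh : cosh (arsinh (B / C)) = A / C := by
    rw [cosh_arsinh, ← sqrt_sq (div_pos hA hC).le]
    congr 1
    field_simp
    linarith
  refine ⟨C, arsinh (B / C), fun u => ?_⟩
  rw [cosh_sub, sinh_arsinh, hcosh]
  field_simp

/-- The hyperbolic Pythagorean theorem along `γ`, `γ t₀` being the foot of the perpendicular
from `k`; every geodesic of `ℍ` satisfies it. -/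
def IsPythagoreanGeodesic (γ : ℝ → ℍ) : Prop :=
  Isometry γ ∧ ∀ k : ℍ, ∃ t₀ : ℝ, ∀ u, cosh (dist k (γ u)) = cosh (dist k (γ t₀)) * cosh (u - t₀)

namespace IsPythagoreanGeodesic

variable {γ : ℝ → ℍ}

theorem of_cosh_dist_eq (hγ : Isometry γ)
    (h : ∀ k : ℍ, ∃ A B : ℝ, |B| < A ∧ ∀ u, cosh (dist k (γ u)) = A * cosh u - B * sinh u) :
    IsPythagoreanGeodesic γ := by
  refine ⟨hγ, fun k => ?_⟩
  obtain ⟨A, B, hAB, hk⟩ := h k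
  obtain ⟨C, t₀, hC⟩ := exists_mul_cosh_sub_eq hAB
  refine ⟨t₀, fun u => ?_⟩
  rw [hk, hk, hC, hC, sub_self, cosh_zero, mul_one]

theorem comp_add_left (hγ : IsPythagoreanGeodesic γ) (c : ℝ) :
    IsPythagoreanGeodesic fun t => γ (c + t) := by
  refine ⟨hγ.1.comp (isometry_add_left c), fun k => ?_⟩
  obtain ⟨t₀, hk⟩ := hγ.2 k
  refine ⟨t₀ - c, fun u => ?_⟩
  rw [hk, hk (c + (t₀ - c)), add_sub_cancel, sub_self, cosh_zero, mul_one]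
  congr 2
  ring

theorem comp_neg (hγ : IsPythagoreanGeodesic γ) : IsPythagoreanGeodesic fun t => γ (-t) := by
  refine ⟨hγ.1.comp isometry_neg, fun k => ?_⟩
  obtain ⟨t₀, hk⟩ := hγ.2 k
  refine ⟨-t₀, fun u => ?_⟩
  rw [hk, hk (-(-t₀)), neg_neg, sub_self, cosh_zero, mul_one, ← cosh_neg (u - -t₀)]
  congr 2
  ring

theorem abs_sub_le_dist_of_dist_le_infDist (hγ : IsPythagoreanGeodesic γ) {k : ℍ} {t : ℝ}
    (ht : dist k (γ t) ≤ infDist k (range γ)) (s : ℝ) : |t - s| ≤ dist k (γ s) := by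
  obtain ⟨t₀, hk⟩ := hγ.2 k
  have hC : 1 ≤ cosh (dist k (γ t₀)) := one_le_cosh _
  have hfoot : cosh (dist k (γ t)) ≤ cosh (dist k (γ t₀)) := by
    rw [cosh_le_cosh, abs_of_nonneg dist_nonneg, abs_of_nonneg dist_nonneg]
    exact ht.trans (infDist_le_dist_of_mem (mem_range_self t₀))
  have ht₀ : t = t₀ := by
    by_contra hne
    have := one_lt_cosh.mpr (sub_ne_zero.mpr hne)
    rw [hk t] at hfoot
    nlinarith
  have hs : cosh (s - t₀) ≤ cosh (dist k (γ s)) := by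
    rw [hk s]
    nlinarith [one_le_cosh (s - t₀)]
  rw [ht₀, abs_sub_comm, ← abs_of_nonneg (dist_nonneg (x := k) (y := γ s)), ← cosh_le_cosh]
  exact hs

theorem proj_subset_image_Iic (hγ : IsPythagoreanGeodesic γ) {K : Set ℍ} {R : ℝ}
    (hK : ∀ k ∈ K, dist k (γ 0) ≤ R) : Proj (range γ) K ⊆ γ '' Iic R := by
  rintro _ ⟨⟨t, rfl⟩, k, hk, hfoot⟩
  have := hγ.abs_sub_le_dist_of_dist_le_infDist hfoot.le 0
  rw [sub_zero] at this
  exact ⟨t, (le_abs_self t).trans (this.trans (hK k hk)), rfl⟩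

end IsPythagoreanGeodesic

theorem isPythagoreanGeodesic_vertical (a : ℝ) :
    IsPythagoreanGeodesic fun y => UpperHalfPlane.mk ⟨a, exp y⟩ (exp_pos y) := by
  refine .of_cosh_dist_eq (UpperHalfPlane.isometry_vertical_line a) fun k => ?_
  have hk := k.im_pos
  refine ⟨((k.re - a) ^ 2 + k.im ^ 2 + 1) / (2 * k.im),
    ((k.re - a) ^ 2 + k.im ^ 2 - 1) / (2 * k.im), ?_, fun u => ?_⟩
  · rw [abs_lt, ← sub_pos, ← sub_pos (b := _ / _)]
    constructor <;> field_simp <;> nlinarith [sq_nonneg (k.re - a)]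
  · rw [UpperHalfPlane.cosh_dist', cosh_eq, sinh_eq, exp_neg]
    simp only [UpperHalfPlane.mk_re, UpperHalfPlane.mk_im]
    field_simp
    ring

noncomputable def semicircle (a r : ℝ) (hr : 0 < r) (t : ℝ) : ℍ :=
  ⟨⟨a + r * tanh t, r / cosh t⟩, div_pos hr (cosh_pos t)⟩

section semicircle

variable {a r : ℝ} {hr : 0 < r}

@[simp] theorem semicircle_re (t : ℝ) : (semicircle a r hr t).re = a + r * tanh t := rfl

@[simp] theorem semicircle_im (t : ℝ) : (semicircle a r hr t).im = r / cosh t := rfl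

theorem cosh_dist_semicircle (k : ℍ) (u : ℝ) : cosh (dist k (semicircle a r hr u)) =
    (r ^ 2 + (k.re - a) ^ 2 + k.im ^ 2) / (2 * r * k.im) * cosh u - (k.re - a) / k.im * sinh u := by
  have hk := k.im_pos
  have hu := cosh_pos u
  rw [UpperHalfPlane.cosh_dist', semicircle_re, semicircle_im, tanh_eq_sinh_div_cosh]
  field_simp
  linear_combination (-r ^ 2) * cosh_sq_sub_sinh_sq u

theorem isometry_semicircle : Isometry (semicircle a r hr) := by
  refine Isometry.of_dist_eq fun s t => ?_
  have hs := cosh_pos s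
  refine cosh_injOn dist_nonneg dist_nonneg ?_
  rw [Real.dist_eq, cosh_abs, cosh_dist_semicircle, semicircle_re, semicircle_im, cosh_sub,
    tanh_eq_sinh_div_cosh]
  field_simp
  linear_combination (-r ^ 2 * cosh t) * cosh_sq_sub_sinh_sq s

theorem isPythagoreanGeodesic_semicircle : IsPythagoreanGeodesic (semicircle a r hr) := by
  refine .of_cosh_dist_eq isometry_semicircle fun k => ⟨_, _, ?_, cosh_dist_semicircle k⟩
  have hk := k.im_pos
  rw [abs_lt, ← sub_pos, ← sub_pos (b := _ / _)]
  constructor <;> field_simp <;> nlinarith [sq_nonneg (r - (k.re - a)), sq_nonneg (r + (k.re - a))]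

theorem semicircle_arsinh {z : ℍ} (hz : (z.re - a) ^ 2 + z.im ^ 2 = r ^ 2) :
    semicircle a r hr (arsinh ((z.re - a) / z.im)) = z := by
  have hzi := z.im_pos
  have hcosh : cosh (arsinh ((z.re - a) / z.im)) = r / z.im := by
    rw [cosh_arsinh, ← sqrt_sq (div_pos hr hzi).le]
    congr 1
    field_simp
    linarith
  apply UpperHalfPlane.ext_re_im
  · rw [semicircle_re, tanh_eq_sinh_div_cosh, sinh_arsinh, hcosh]
    field_simp
    ring
  · rw [semicircle_im, hcosh]
    field_simp

end semicircle

theorem exists_isPythagoreanGeodesic_mem_mem (p x : ℍ) :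
    ∃ γ : ℝ → ℍ, IsPythagoreanGeodesic γ ∧ p ∈ range γ ∧ x ∈ range γ := by
  by_cases hre : p.re = x.re
  · refine ⟨_, isPythagoreanGeodesic_vertical p.re, ⟨log p.im, ?_⟩, ⟨log x.im, ?_⟩⟩ <;>
      exact UpperHalfPlane.ext_re_im (by simp [hre]) (by simp [exp_log, UpperHalfPlane.im_pos])
  -- the centre `a` on the real axis is equidistant from `p` and `x`
  set a := (x.re ^ 2 + x.im ^ 2 - p.re ^ 2 - p.im ^ 2) / (2 * (x.re - p.re))
  have hxp : x.re - p.re ≠ 0 := sub_ne_zero.mpr (Ne.symm hre)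
  have hpx : (x.re - a) ^ 2 + x.im ^ 2 = (p.re - a) ^ 2 + p.im ^ 2 := by
    unfold a
    field_simp
    ring
  have hpos : 0 < (p.re - a) ^ 2 + p.im ^ 2 := by nlinarith [sq_nonneg (p.re - a), p.im_pos]
  have hr := sqrt_pos.mpr hpos
  have hr2 := sq_sqrt hpos.le
  exact ⟨_, isPythagoreanGeodesic_semicircle (hr := hr), ⟨_, semicircle_arsinh hr2.symm⟩,
    ⟨_, semicircle_arsinh (hpx.trans hr2.symm)⟩⟩

theorem exists_isPythagoreanGeodesic_through (p x : ℍ) :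
    ∃ γ : ℝ → ℍ, IsPythagoreanGeodesic γ ∧ γ 0 = p ∧ γ (dist p x) = x := by
  obtain ⟨γ, hγ, ⟨s, rfl⟩, ⟨t, rfl⟩⟩ := exists_isPythagoreanGeodesic_mem_mem p x
  rw [hγ.1.dist_eq, Real.dist_eq]
  rcases le_total s t with hst | hts
  · refine ⟨_, hγ.comp_add_left s, by simp, ?_⟩
    rw [abs_sub_comm, abs_of_nonneg (sub_nonneg.mpr hst), add_sub_cancel]
  · refine ⟨_, hγ.comp_neg.comp_add_left (-s), by simp, ?_⟩
    simp only [abs_of_nonneg (sub_nonneg.mpr hts)]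
    ring_nf

theorem normalField_covers_interior_general (K : Set ℍ) (hK : IsConvexBody K) :
    ∀ p ∈ interior K, ∃ (x : ℍ) (Γ : Set ℍ),
      IsGeodesicLine Γ ∧ p ∈ Γ ∧ IsNormalAt K Γ x := by
  intro p hp
  obtain ⟨x, hxK, hfar⟩ := hK.1.exists_isMaxOn ⟨p, interior_subset hp⟩
    (continuous_const.dist continuous_id).continuousOn
  obtain ⟨γ, hγ, hγp, hγx⟩ := exists_isPythagoreanGeodesic_through p x
  have hγK : ∀ k ∈ K, dist (γ 0) k ≤ dist p x := fun k hk => by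
    rw [hγp]
    exact hfar hk
  have hγ' : IsGeodesicParam γ := fun s t => (hγ.1.dist_eq s t).trans (Real.dist_eq s t)
  refine ⟨x, range γ, ⟨γ, hγ', rfl⟩, ⟨0, hγp⟩, ?_, γ, hγ', rfl, dist p x, hγx, Or.inr ?_⟩
  · rw [← hγx] at hxK ⊢
    exact hγ.1.mem_frontier_of_forall_dist_le hxK hγK
  · exact hγ.proj_subset_image_Iic fun k hk => (dist_comm k (γ 0)).trans_le (hγK k hk)

/-- **Lemma.** The normal field of a `C¹`-smooth convex body `K` covers the interior of `K`. -/
theorem normalField_covers_interior (K : Set ℍ) (hK : IsConvexBody K) (hsm : IsC1Smooth K) :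
    ∀ p ∈ interior K, ∃ (x : ℍ) (Γ : Set ℍ),
      IsGeodesicLine Γ ∧ p ∈ Γ ∧ IsNormalAt K Γ x :=
  normalField_covers_interior_general K hK
end
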